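/- Let N ≥ 3, ρ_L, ρ_R ∈ (0,1) and ω_L, ω_R > 0. Then for every 1 ≤ x < y ≤ N−1 the two-point truncated correlation of the explicit measure μ is given by E_μ[η(x)η(y)] − E_μ[η(x)]·E_μ[η(y)] = −(ρ_R − ρ_L)^2 · (1/ω_L + x − 1)(1/ω_R + N − 1 − y) / [ (1/ω_L + 1/ω_R + N − 2)^2 · (1/ω_L + 1/ω_R + N − 3) ], where E_μ[g] := Σ_{η ∈ {0,1}^{{1,…,N−1}}} μ(η) g(η). -/

import Mathlib

noncomputable def sepQ (N : ℕ) (ωL ωR : ℝ) (J : Finset ℕ) : ℝ :=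
  (((J.sort (· ≤ ·)).zipIdx).map
    (fun p => (1 / ωL + (p.1 : ℝ) - ((p.2 : ℝ) + 1)) /
      (1 / ωL + 1 / ωR + (N : ℝ) - 1 - ((p.2 : ℝ) + 1)))).prod

noncomputable def sepF (N : ℕ) (ωL ωR : ℝ) (I : Finset ℕ) : ℝ :=
  ∑ J ∈ (Finset.Icc 1 (N - 1)).powerset.filter (fun J => I ⊆ J),
    (-1 : ℝ) ^ (J \ I).card * sepQ N ωL ωR J

noncomputable def sepB (N : ℕ) (ρL ρR : ℝ) (I A : Finset ℕ) : ℝ :=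
  (∏ x ∈ I, (if x ∈ A then ρR else 1 - ρR)) *
    (∏ x ∈ Finset.Icc 1 (N - 1) \ I, (if x ∈ A then ρL else 1 - ρL))

noncomputable def sepMu (N : ℕ) (ωL ωR ρL ρR : ℝ) (A : Finset ℕ) : ℝ :=
  ∑ I ∈ (Finset.Icc 1 (N - 1)).powerset, sepF N ωL ωR I * sepB N ρL ρR I A

noncomputable def occ (A : Finset ℕ) (x : ℕ) : ℝ := if x ∈ A then 1 else 0

noncomputable def sepGen (N : ℕ) (ωL ωR ρL ρR : ℝ) (f : Finset ℕ → ℝ) (A : Finset ℕ) : ℝ :=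
  (∑ x ∈ Finset.Icc 1 (N - 2),
      (occ A x * (1 - occ A (x + 1)) * (f (insert (x + 1) (A.erase x)) - f A) +
        occ A (x + 1) * (1 - occ A x) * (f (insert x (A.erase (x + 1))) - f A))) +
    ωL * (occ A 1 * (1 - ρL) * (f (A.erase 1) - f A) +
        ρL * (1 - occ A 1) * (f (insert 1 A) - f A)) +
    ωR * (occ A (N - 1) * (1 - ρR) * (f (A.erase (N - 1)) - f A) +
        ρR * (1 - occ A (N - 1)) * (f (insert (N - 1) A) - f A))

/-
The measure `μ = ∑_I F(I) B_I` is a signed mixture of product Bernoulli measures, `B_I` having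
density `ρ_I = ρR` on `I` and `ρL` off `I`. Under `B_I` the moment `E[∏_{w ∈ K} η(w)]` is
`∏_{w ∈ K} ρ_I(w)`, and writing `ρ_I = ρL + (ρR - ρL) 𝟙_I` expands it as
`∑_{L ⊆ K} (ρR - ρL)^|L| ρL^|K \ L| 𝟙[L ⊆ I]`. Since `F` is the Möbius transform of `Q` on the
Boolean lattice, `∑_{I ⊇ L} F(I) = Q(L)`, hence
`E_μ[∏_{w ∈ K} η(w)] = ∑_{L ⊆ K} (ρR - ρL)^|L| ρL^|K \ L| Q(L)`.
For `K = {x}` and `K = {x, y}` the truncated correlation collapses to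
`(ρR - ρL)^2 (Q{x, y} - Q{x} Q{y})`, and the product formula for `Q` finishes the computation.
-/

open Finset

section FinsetSums

variable {α R : Type*} [DecidableEq α] [CommRing R]

theorem sum_Icc_neg_one_pow_card_sdiff (K J : Finset α) :
    ∑ I ∈ Icc K J, (-1 : R) ^ #(J \ I) = if K = J then 1 else 0 := by
  by_cases hKJ : K ⊆ J
  · have hpow : ∑ T ∈ (J \ K).powerset, (-1 : R) ^ #T = if J \ K = ∅ then 1 else 0 := by
      have h := congrArg (Int.cast : ℤ → R) (sum_powerset_neg_one_pow_card (x := J \ K))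
      simpa [apply_ite] using h
    have hempty : J \ K = ∅ ↔ K = J := by
      rw [sdiff_eq_empty_iff_subset]
      exact ⟨fun h => (h.antisymm hKJ).symm, fun h => h ▸ subset_rfl⟩
    rw [← if_congr hempty rfl rfl, ← hpow]
    refine sum_nbij' (J \ ·) (J \ ·) ?_ ?_ ?_ ?_ (fun _ _ => rfl)
    · intro I hI
      rw [mem_Icc] at hI
      exact mem_powerset.2 (sdiff_subset_sdiff subset_rfl hI.1)
    · intro T hT
      rw [mem_powerset] at hT
      rw [mem_Icc]
      exact ⟨subset_sdiff.2 ⟨hKJ, disjoint_of_subset_right hT disjoint_sdiff⟩, sdiff_subset⟩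
    · intro I hI
      exact Finset.sdiff_sdiff_eq_self (mem_Icc.1 hI).2
    · intro T hT
      exact Finset.sdiff_sdiff_eq_self ((mem_powerset.1 hT).trans sdiff_subset)
  · rw [Icc_eq_empty hKJ, sum_empty, if_neg (fun h => hKJ h.le)]

/-- Möbius inversion on the Boolean lattice of subsets of `S`. -/
theorem sum_Icc_sum_Icc_neg_one_pow_mul {K S : Finset α} (hK : K ⊆ S) (g : Finset α → R) :
    ∑ I ∈ Icc K S, ∑ J ∈ Icc I S, (-1 : R) ^ #(J \ I) * g J = g K := by
  rw [sum_comm' (t' := Icc K S) (s' := fun J => Icc K J)]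
  · simp_rw [← sum_mul, sum_Icc_neg_one_pow_card_sdiff, ite_mul, one_mul, zero_mul]
    rw [sum_ite_eq, if_pos (mem_Icc.2 ⟨subset_rfl, hK⟩)]
  · intro I J
    simp only [mem_Icc]
    constructor
    · rintro ⟨⟨hKI, -⟩, hIJ, hJS⟩; exact ⟨⟨hKI, hIJ⟩, hKI.trans hIJ, hJS⟩
    · rintro ⟨⟨hKI, hIJ⟩, -, hJS⟩; exact ⟨⟨hKI, hIJ.trans hJS⟩, hIJ, hJS⟩

theorem sum_powerset_prod_ite (S : Finset α) (f g : α → R) :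
    ∑ A ∈ S.powerset, ∏ z ∈ S, (if z ∈ A then f z else g z) = ∏ z ∈ S, (f z + g z) := by
  rw [prod_add]
  refine sum_congr rfl fun A hA => ?_
  rw [prod_ite, filter_mem_eq_inter, inter_eq_right.2 (mem_powerset.1 hA), ← sdiff_eq_filter]

theorem sum_powerset_prod_bernoulli_mul_prod_boole {K S : Finset α} (hK : K ⊆ S)
    (p : α → R) :
    ∑ A ∈ S.powerset,
        (∏ z ∈ S, (if z ∈ A then p z else 1 - p z)) * ∏ w ∈ K, (if w ∈ A then 1 else 0)
      = ∏ w ∈ K, p w := by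
  have hprodK : ∀ g : α → R, ∏ w ∈ K, g w = ∏ z ∈ S, (if z ∈ K then g z else 1) := by
    intro g; rw [prod_ite_mem, inter_eq_right.2 hK]
  have hsummand : ∀ A : Finset α,
      (∏ z ∈ S, (if z ∈ A then p z else 1 - p z)) * ∏ w ∈ K, (if w ∈ A then (1 : R) else 0)
        = ∏ z ∈ S, (if z ∈ A then p z else if z ∈ K then 0 else 1 - p z) := by
    intro A
    rw [hprodK, ← prod_mul_distrib]
    refine prod_congr rfl fun z _ => ?_
    split_ifs <;> simp
  simp_rw [hsummand, sum_powerset_prod_ite]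
  rw [hprodK]
  refine prod_congr rfl fun z _ => ?_
  split_ifs <;> ring

end FinsetSums

section SepMeasure

variable {N : ℕ} {ωL ωR ρL ρR : ℝ}

theorem sepQ_empty : sepQ N ωL ωR ∅ = 1 := by
  simp [sepQ]

theorem sepQ_singleton (x : ℕ) :
    sepQ N ωL ωR {x} = (1 / ωL + x - 1) / (1 / ωL + 1 / ωR + N - 2) := by
  simp only [sepQ, sort_singleton, List.zipIdx_cons, List.zipIdx_nil, List.map_cons,
    List.map_nil, List.prod_cons, List.prod_nil]
  ring_nf

theorem sepQ_pair {x y : ℕ} (hxy : x < y) :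
    sepQ N ωL ωR {x, y} =
      (1 / ωL + x - 1) / (1 / ωL + 1 / ωR + N - 2) *
        ((1 / ωL + y - 2) / (1 / ωL + 1 / ωR + N - 3)) := by
  have hsort : ({x, y} : Finset ℕ).sort (· ≤ ·) = [x, y] := by
    rw [show ({x, y} : Finset ℕ) = insert x {y} from rfl, sort_insert, sort_singleton]
    · intro b hb; rw [mem_singleton] at hb; omega
    · rw [mem_singleton]; omega
  simp only [sepQ, hsort, List.zipIdx_cons, List.zipIdx_nil, List.map_cons,
    List.map_nil, List.prod_cons, List.prod_nil]
  ring_nf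

theorem sum_Icc_sepF {L : Finset ℕ} (hL : L ⊆ Icc 1 (N - 1)) :
    ∑ I ∈ Icc L (Icc 1 (N - 1)), sepF N ωL ωR I = sepQ N ωL ωR L := by
  simp only [sepF, ← Icc_eq_filter_powerset]
  exact sum_Icc_sum_Icc_neg_one_pow_mul hL _

/-- The density profile of the product Bernoulli measure `B_I`. -/
noncomputable def sepDensity (ρL ρR : ℝ) (I : Finset ℕ) (z : ℕ) : ℝ :=
  if z ∈ I then ρR else ρL

theorem sepB_eq_prod {I : Finset ℕ} (A : Finset ℕ) (hI : I ⊆ Icc 1 (N - 1)) :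
    sepB N ρL ρR I A = ∏ z ∈ Icc 1 (N - 1),
      (if z ∈ A then sepDensity ρL ρR I z else 1 - sepDensity ρL ρR I z) := by
  rw [← prod_sdiff hI, sepB, mul_comm]
  congr 1
  · exact prod_congr rfl fun z hz => by simp [sepDensity, (mem_sdiff.1 hz).2]
  · exact prod_congr rfl fun z hz => by simp [sepDensity, hz]

theorem prod_sepDensity (I K : Finset ℕ) :
    ∏ w ∈ K, sepDensity ρL ρR I w =
      ∑ L ∈ K.powerset, (if L ⊆ I then (ρR - ρL) ^ #L else 0) * ρL ^ #(K \ L) := by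
  have hsplit : ∀ w, sepDensity ρL ρR I w = (if w ∈ I then ρR - ρL else 0) + ρL := by
    intro w; unfold sepDensity; split_ifs <;> ring
  simp_rw [hsplit, prod_add, prod_ite_zero, prod_const]
  rfl

theorem sum_sepMu_mul_prod_occ {K : Finset ℕ} (hK : K ⊆ Icc 1 (N - 1)) :
    ∑ A ∈ (Icc 1 (N - 1)).powerset, sepMu N ωL ωR ρL ρR A * ∏ w ∈ K, occ A w
      = ∑ L ∈ K.powerset, (ρR - ρL) ^ #L * ρL ^ #(K \ L) * sepQ N ωL ωR L := by
  set S := Icc 1 (N - 1)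
  calc ∑ A ∈ S.powerset, sepMu N ωL ωR ρL ρR A * ∏ w ∈ K, occ A w
      = ∑ I ∈ S.powerset, sepF N ωL ωR I * ∏ w ∈ K, sepDensity ρL ρR I w := by
        simp only [sepMu, sum_mul]
        rw [sum_comm]
        refine sum_congr rfl fun I hI => ?_
        simp only [sepB_eq_prod _ (mem_powerset.1 hI), occ, mul_assoc, ← mul_sum]
        rw [sum_powerset_prod_bernoulli_mul_prod_boole hK]
    _ = ∑ L ∈ K.powerset, (∑ I ∈ Icc L S, sepF N ωL ωR I) * ((ρR - ρL) ^ #L * ρL ^ #(K \ L)) := by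
        simp only [prod_sepDensity, mul_sum]
        rw [sum_comm]
        refine sum_congr rfl fun L _ => ?_
        rw [Icc_eq_filter_powerset, sum_filter, sum_mul]
        refine sum_congr rfl fun I _ => ?_
        split_ifs <;> ring
    _ = ∑ L ∈ K.powerset, (ρR - ρL) ^ #L * ρL ^ #(K \ L) * sepQ N ωL ωR L := by
        refine sum_congr rfl fun L hL => ?_
        rw [sum_Icc_sepF ((mem_powerset.1 hL).trans hK)]
        ring

theorem sum_sepMu_mul_occ {z : ℕ} (hz : z ∈ Icc 1 (N - 1)) :
    ∑ A ∈ (Icc 1 (N - 1)).powerset, sepMu N ωL ωR ρL ρR A * occ A z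
      = ρL + (ρR - ρL) * sepQ N ωL ωR {z} := by
  have h := sum_sepMu_mul_prod_occ (ωL := ωL) (ωR := ωR) (ρL := ρL) (ρR := ρR)
    (singleton_subset_iff.2 hz)
  simp only [prod_singleton] at h
  rw [h, ← insert_empty, sum_powerset_insert (notMem_empty z)]
  simp [sepQ_empty]

theorem sum_sepMu_mul_occ_mul_occ {x y : ℕ} (hx : x ∈ Icc 1 (N - 1)) (hy : y ∈ Icc 1 (N - 1))
    (hxy : x ≠ y) :
    ∑ A ∈ (Icc 1 (N - 1)).powerset, sepMu N ωL ωR ρL ρR A * (occ A x * occ A y)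
      = ρL ^ 2 + ρL * (ρR - ρL) * (sepQ N ωL ωR {x} + sepQ N ωL ωR {y})
        + (ρR - ρL) ^ 2 * sepQ N ωL ωR {x, y} := by
  have h := sum_sepMu_mul_prod_occ (ωL := ωL) (ωR := ωR) (ρL := ρL) (ρR := ρR)
    (insert_subset hx (singleton_subset_iff.2 hy))
  simp only [prod_pair hxy] at h
  rw [h, sum_powerset_insert (by simpa using hxy), ← insert_empty (a := y),
    sum_powerset_insert (notMem_empty y), sum_powerset_insert (notMem_empty y)]
  have hy_sdiff_xy : {y} \ {x, y} = (∅ : Finset ℕ) := sdiff_eq_empty_iff_subset.2 (by simp)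
  simp only [powerset_empty, insert_empty_eq, sum_singleton, card_empty, pow_zero, sdiff_empty,
    mem_singleton, hxy, not_false_eq_true, card_insert_of_notMem, card_singleton, Nat.reduceAdd,
    one_mul, sepQ_empty, mul_one, pow_one, sdiff_singleton_eq_erase, mem_insert, or_true,
    card_erase_of_mem, Nat.add_one_sub_one, insert_sdiff_insert, erase_eq_of_notMem, hy_sdiff_xy]
  ring

end SepMeasure

theorem sep_two_point_correlation_general
    (N : ℕ) (hN : 3 ≤ N) (ρL ρR ωL ωR : ℝ)
    (hωL : 0 < ωL) (hωR : 0 < ωR)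
    (x y : ℕ) (hx : 1 ≤ x) (hxy : x < y) (hy : y ≤ N - 1) :
    (∑ A ∈ (Finset.Icc 1 (N - 1)).powerset,
          sepMu N ωL ωR ρL ρR A * (occ A x * occ A y)) -
        (∑ A ∈ (Finset.Icc 1 (N - 1)).powerset, sepMu N ωL ωR ρL ρR A * occ A x) *
          (∑ A ∈ (Finset.Icc 1 (N - 1)).powerset, sepMu N ωL ωR ρL ρR A * occ A y)
      = -(ρR - ρL) ^ 2 *
          ((1 / ωL + (x : ℝ) - 1) * (1 / ωR + (N : ℝ) - 1 - (y : ℝ))) /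
            ((1 / ωL + 1 / ωR + (N : ℝ) - 2) ^ 2 * (1 / ωL + 1 / ωR + (N : ℝ) - 3)) := by
  have hx_mem : x ∈ Icc 1 (N - 1) := mem_Icc.2 ⟨hx, by omega⟩
  have hy_mem : y ∈ Icc 1 (N - 1) := mem_Icc.2 ⟨by omega, hy⟩
  rw [sum_sepMu_mul_occ_mul_occ hx_mem hy_mem hxy.ne, sum_sepMu_mul_occ hx_mem,
    sum_sepMu_mul_occ hy_mem, sepQ_singleton, sepQ_singleton, sepQ_pair hxy]
  have hN_real : (3 : ℝ) ≤ N := by exact_mod_cast hN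
  have ha : 0 < 1 / ωL := by positivity
  have hb : 0 < 1 / ωR := by positivity
  generalize 1 / ωL = a at ha ⊢
  generalize 1 / ωR = b at hb ⊢
  have hD₂ : a + b + (N : ℝ) - 2 ≠ 0 := by linarith
  have hD₃ : a + b + (N : ℝ) - 3 ≠ 0 := by linarith
  field_simp
  ring

/-- the two-point truncated correlation of μ. -/
theorem sep_two_point_correlation
    (N : ℕ) (hN : 3 ≤ N) (ρL ρR ωL ωR : ℝ)
    (hρL : 0 < ρL ∧ ρL < 1) (hρR : 0 < ρR ∧ ρR < 1)
    (hωL : 0 < ωL) (hωR : 0 < ωR)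
    (x y : ℕ) (hx : 1 ≤ x) (hxy : x < y) (hy : y ≤ N - 1) :
    (∑ A ∈ (Finset.Icc 1 (N - 1)).powerset,
          sepMu N ωL ωR ρL ρR A * (occ A x * occ A y)) -
        (∑ A ∈ (Finset.Icc 1 (N - 1)).powerset, sepMu N ωL ωR ρL ρR A * occ A x) *
          (∑ A ∈ (Finset.Icc 1 (N - 1)).powerset, sepMu N ωL ωR ρL ρR A * occ A y)
      = -(ρR - ρL) ^ 2 *
          ((1 / ωL + (x : ℝ) - 1) * (1 / ωR + (N : ℝ) - 1 - (y : ℝ))) /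
            ((1 / ωL + 1 / ωR + (N : ℝ) - 2) ^ 2 * (1 / ωL + 1 / ωR + (N : ℝ) - 3)) :=
  sep_two_point_correlation_general N hN ρL ρR ωL ωR hωL hωR x y hx hxy hy
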